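/- arXiv:2001.06521 — 4 statements merged into one kernel-verified Lean document; each statement's English description precedes it below -/
import Mathlib

section
/- The linear map φ_∞ : W_∞ → W_∞ is surjective. -/
/-!
Write `ψ = φ - α`, so that `φ_∞` acts on `w ⊗ e_n` as `ψ w ⊗ e_n - w ⊗ e_{n-1}`. It suffices to
hit every `w ⊗ e_n`. If `ψ^m u = 0`, then `u ⊗ e_n` is hit by induction on `m`, correcting by
`u ⊗ e_{n+1}`. If `v` starts an infinite chain `v = ψ g₁, g₁ = ψ g₂, …`, then `v ⊗ e_n` is hit by
induction on `n`. Factoring the annihilating polynomial of `ψ` as `X^m s` with `s(0) ≠ 0` splits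
`W = ker ψ^m ⊕ ker s(ψ)`, and `ψ` is surjective on `ker s(ψ)`, which supplies the chains.
-/

open Polynomial

def IsSlotwiseMinusShift {R W : Type*} [Semiring R] [AddCommGroup W] [Module R W]
    (ψ : Module.End R W) (Φ : (ℕ →₀ W) →ₗ[R] (ℕ →₀ W)) : Prop :=
  ∀ (k : ℕ) (w : W),
    Φ (Finsupp.single k w) =
      Finsupp.single k (ψ w) - (if k = 0 then 0 else Finsupp.single (k - 1) w)

namespace IsSlotwiseMinusShift

variable {R W : Type*} [Semiring R] [AddCommGroup W] [Module R W]
  {ψ : Module.End R W} {Φ : (ℕ →₀ W) →ₗ[R] (ℕ →₀ W)}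

theorem single_mem_range_of_pow_apply_eq_zero (hΦ : IsSlotwiseMinusShift ψ Φ) {m : ℕ} :
    ∀ (n : ℕ) {u : W}, (ψ ^ m) u = 0 → Finsupp.single n u ∈ LinearMap.range Φ := by
  induction m with
  | zero =>
    intro n u hu
    rw [pow_zero, Module.End.one_apply] at hu
    simp [hu]
  | succ m ih =>
    intro n u hu
    obtain ⟨x, hx⟩ := ih (n + 1) (u := ψ u) (by rwa [← Module.End.mul_apply, ← pow_succ])
    refine ⟨x - Finsupp.single (n + 1) u, ?_⟩
    simp [hx, hΦ (n + 1) u]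

theorem single_mem_range_of_chain (hΦ : IsSlotwiseMinusShift ψ Φ) (n : ℕ) :
    ∀ {g : ℕ → W}, (∀ j, ψ (g (j + 1)) = g j) → Finsupp.single n (g 0) ∈ LinearMap.range Φ := by
  induction n with
  | zero =>
    intro g hg
    exact ⟨Finsupp.single 0 (g 1), by simp [hΦ 0, hg 0]⟩
  | succ n ih =>
    intro g hg
    obtain ⟨x, hx⟩ := ih (g := fun j => g (j + 1)) fun j => hg (j + 1)
    refine ⟨Finsupp.single (n + 1) (g 1) + x, ?_⟩
    simp [hx, hΦ (n + 1), hg 0]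

end IsSlotwiseMinusShift

theorem Finsupp.surjective_of_single_mem_range {R M N ι : Type*} [Semiring R] [AddCommMonoid M]
    [Module R M] [AddCommMonoid N] [Module R N] (f : N →ₗ[R] (ι →₀ M))
    (h : ∀ i m, Finsupp.single i m ∈ LinearMap.range f) : Function.Surjective f := by
  intro y
  change y ∈ LinearMap.range f
  induction y using Finsupp.induction_linear with
  | zero => exact zero_mem _
  | add x y hx hy => exact add_mem hx hy
  | single i m => exact h i m

theorem Set.SurjOn.exists_chain {α : Type*} {f : α → α} {s : Set α} (h : Set.SurjOn f s s)
    {v : α} (hv : v ∈ s) : ∃ g : ℕ → α, g 0 = v ∧ ∀ j, f (g (j + 1)) = g j := by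
  choose T hTs hT using fun x : s => h x.2
  let G : ℕ → s := fun j => Nat.rec ⟨v, hv⟩ (fun _ x => ⟨T x, hTs x⟩) j
  exact ⟨fun j => (G j).1, rfl, fun j => hT (G j)⟩

namespace Polynomial

variable {K W : Type*} [Field K] [AddCommGroup W] [Module K W] (ψ : Module.End K W)

theorem sup_ker_pow_ker_aeval_eq_top {m : ℕ} {s : K[X]} (hψ : aeval ψ (X ^ m * s) = 0)
    (hs : ¬ X ∣ s) : LinearMap.ker (ψ ^ m) ⊔ LinearMap.ker (aeval ψ s) = ⊤ := by
  have hcop : IsCoprime (X ^ m : K[X]) s := (irreducible_X.coprime_iff_not_dvd.mpr hs).pow_left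
  simpa [hψ] using sup_ker_aeval_eq_ker_aeval_mul_of_coprime ψ hcop

theorem surjOn_ker_aeval_of_not_X_dvd {s : K[X]} (hs : ¬ X ∣ s) :
    Set.SurjOn ψ (LinearMap.ker (aeval ψ s)) (LinearMap.ker (aeval ψ s)) := by
  intro v (hv : aeval ψ s v = 0)
  have hc : s.coeff 0 ≠ 0 := mt X_dvd_iff.mpr hs
  -- `X * t = 1 - s / s(0)`, so `t(ψ)` inverts `ψ` on `ker s(ψ)`.
  set t : K[X] := C (-(s.coeff 0)⁻¹) * s.divX
  have hXt : X * t = 1 - C (s.coeff 0)⁻¹ * s := by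
    have hdivX := X_mul_divX_add s
    have hcinv : C (s.coeff 0)⁻¹ * C (s.coeff 0) = 1 := by rw [← C_mul, inv_mul_cancel₀ hc, C_1]
    simp only [t, C_neg]
    linear_combination (-C (s.coeff 0)⁻¹) * hdivX + hcinv
  clear_value t
  refine ⟨aeval ψ t v, ?_, ?_⟩
  · change aeval ψ s (aeval ψ t v) = 0
    rw [← Module.End.mul_apply, ← map_mul, mul_comm, map_mul, Module.End.mul_apply, hv, map_zero]
  · have hψt : ψ * aeval ψ t = aeval ψ (X * t) := by rw [map_mul, aeval_X]
    rw [← Module.End.mul_apply, hψt, hXt]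
    simp [hv]

end Polynomial

theorem phi_infty_surjective {W : Type*} [AddCommGroup W] [Module ℂ W]
    (φ : Module.End ℂ W)
    (hmin : ∃ p : Polynomial ℂ, p ≠ 0 ∧ Polynomial.aeval φ p = 0)
    (α : ℂ)
    (Φ : (ℕ →₀ W) →ₗ[ℂ] (ℕ →₀ W))
    (hΦ : ∀ (k : ℕ) (w : W),
      Φ (Finsupp.single k w) =
        Finsupp.single k ((φ - α • 1) w) -
          (if k = 0 then 0 else Finsupp.single (k - 1) w)) :
    Function.Surjective Φ := by
  obtain ⟨p, hp0, hp⟩ := hmin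
  set ψ : Module.End ℂ W := φ - α • 1
  have hΦ : IsSlotwiseMinusShift ψ Φ := hΦ
  have hψ : aeval ψ (p.comp (X + C α)) = 0 := by
    rw [aeval_comp, ← hp]
    congr 1
    simp [ψ, Algebra.algebraMap_eq_smul_one]
  obtain ⟨s, hps, hXs⟩ := (p.comp (X + C α)).exists_eq_pow_rootMultiplicity_mul_and_not_dvd
    (comp_X_add_C_ne_zero_iff.mpr hp0) 0
  rw [C_0, sub_zero] at hps hXs
  rw [hps] at hψ
  refine Finsupp.surjective_of_single_mem_range Φ fun n w => ?_
  obtain ⟨u, hu, v, hv, rfl⟩ :=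
    Submodule.mem_sup.mp (sup_ker_pow_ker_aeval_eq_top ψ hψ hXs ▸ Submodule.mem_top (x := w))
  obtain ⟨g, rfl, hg⟩ := (surjOn_ker_aeval_of_not_X_dvd ψ hXs).exists_chain hv
  rw [Finsupp.single_add]
  exact add_mem (hΦ.single_mem_range_of_pow_apply_eq_zero n hu) (hΦ.single_mem_range_of_chain n hg)
end

section
/- The map sending w to Σ_{i≥0} (φ − α)^i(w) ⊗ e_i (a finite sum, since w is annihilated by a power of φ − α) is a well-defined ℂ-linear isomorphism from the generalized α-eigenspace W_α onto the kernel of φ_∞. -/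
/-!
A vector `v = Σ vₖ ⊗ eₖ` lies in `ker φ_∞` exactly when `v_{k+1} = ψ vₖ` for all `k`, where
`ψ = φ - α`, i.e. when `vₖ = ψᵏ v₀`. So `v` is determined by `v₀`, and finiteness of its support
says precisely that `ψ` is nilpotent on `v₀`: evaluation at `0` inverts `w ↦ Σ ψⁱ w ⊗ eᵢ`.
-/

namespace Finsupp

variable {R M : Type*} [Semiring R] [AddCommGroup M] [Module R M]

theorem apply_eq_sub_apply_succ_of_single {ψ : Module.End R M} {Φ : (ℕ →₀ M) →ₗ[R] ℕ →₀ M}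
    (hΦ : ∀ k w, Φ (single k w) = single k (ψ w) - if k = 0 then 0 else single (k - 1) w)
    (v : ℕ →₀ M) (k : ℕ) : Φ v k = ψ (v k) - v (k + 1) := by
  induction v using Finsupp.induction_linear with
  | zero => simp
  | add f g hf hg => simp only [map_add, add_apply, hf, hg]; abel
  | single j w =>
    classical
    cases j <;> simp [hΦ, single_apply, apply_ite ψ]

variable {ψ : Module.End R M} {Φ : (ℕ →₀ M) →ₗ[R] ℕ →₀ M} {v : ℕ →₀ M}

theorem mem_ker_iff_apply_succ (hΦ : ∀ v k, Φ v k = ψ (v k) - v (k + 1)) :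
    v ∈ LinearMap.ker Φ ↔ ∀ k, v (k + 1) = ψ (v k) := by
  simp only [LinearMap.mem_ker, Finsupp.ext_iff, hΦ, zero_apply, sub_eq_zero, eq_comm (a := v _)]

theorem apply_eq_pow_apply_zero (hv : ∀ k, v (k + 1) = ψ (v k)) (k : ℕ) :
    v k = (ψ ^ k) (v 0) := by
  induction k with
  | zero => rfl
  | succ k ih => rw [hv, ih, pow_succ', Module.End.mul_apply]

theorem exists_pow_apply_zero_eq_zero (hv : ∀ k, v (k + 1) = ψ (v k)) :
    ∃ N, (ψ ^ N) (v 0) = 0 := by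
  obtain ⟨N, hN⟩ := v.support.exists_nat_subset_range
  refine ⟨N, ?_⟩
  rw [← apply_eq_pow_apply_zero hv, ← Finsupp.notMem_support_iff]
  exact fun h => Finset.notMem_range_self (hN h)

end Finsupp

namespace Module.End

variable {R M : Type*} [Semiring R] [AddCommGroup M] [Module R M]

noncomputable def powOrbit (ψ : End R M) (w : M) (hw : ∃ N, (ψ ^ N) w = 0) : ℕ →₀ M :=
  Finsupp.ofSupportFinite (fun i => (ψ ^ i) w) <| by
    obtain ⟨N, hN⟩ := hw
    refine (Set.finite_Iio N).subset fun i hi => ?_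
    by_contra hiN
    exact hi (pow_map_zero_of_le (not_lt.1 hiN) hN)

@[simp]
theorem powOrbit_apply (ψ : End R M) (w : M) (hw : ∃ N, (ψ ^ N) w = 0) (i : ℕ) :
    powOrbit ψ w hw i = (ψ ^ i) w :=
  rfl

variable {ψ : End R M} {Φ : (ℕ →₀ M) →ₗ[R] ℕ →₀ M}

theorem powOrbit_mem_ker (hΦ : ∀ v k, Φ v k = ψ (v k) - v (k + 1)) (w : M)
    (hw : ∃ N, (ψ ^ N) w = 0) : powOrbit ψ w hw ∈ LinearMap.ker Φ := by
  rw [Finsupp.mem_ker_iff_apply_succ hΦ]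
  intro k
  simp [pow_succ']

noncomputable def powOrbitKer (hΦ : ∀ v k, Φ v k = ψ (v k) - v (k + 1)) (p : Submodule R M)
    (hp : ∀ w ∈ p, ∃ N, (ψ ^ N) w = 0) : p →ₗ[R] LinearMap.ker Φ where
  toFun w := ⟨powOrbit ψ w (hp w w.2), powOrbit_mem_ker hΦ w _⟩
  map_add' v w := by ext i; simp
  map_smul' c w := by ext i; simp

@[simp]
theorem powOrbitKer_apply (hΦ : ∀ v k, Φ v k = ψ (v k) - v (k + 1)) (p : Submodule R M)
    (hp : ∀ w ∈ p, ∃ N, (ψ ^ N) w = 0) (w : p) (i : ℕ) :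
    (powOrbitKer hΦ p hp w : ℕ →₀ M) i = (ψ ^ i) (w : M) :=
  rfl

theorem bijective_powOrbitKer (hΦ : ∀ v k, Φ v k = ψ (v k) - v (k + 1))
    (p : Submodule R M) (hp : ∀ w, w ∈ p ↔ ∃ N, (ψ ^ N) w = 0) :
    Function.Bijective (powOrbitKer hΦ p fun w => (hp w).1) := by
  refine ⟨fun v w hvw => Subtype.ext ?_, fun u => ?_⟩
  · simpa using congr_arg (fun u : LinearMap.ker Φ => (u : ℕ →₀ M) 0) hvw
  · have hu := (Finsupp.mem_ker_iff_apply_succ hΦ).1 u.2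
    refine ⟨⟨(u : ℕ →₀ M) 0, (hp _).2 (Finsupp.exists_pow_apply_zero_eq_zero hu)⟩, ?_⟩
    ext k
    simp [Finsupp.apply_eq_pow_apply_zero hu k]

end Module.End

theorem gen_eigenspace_iso_ker_phi_infty {W : Type*} [AddCommGroup W] [Module ℂ W]
    (φ : Module.End ℂ W) (α : ℂ)
    (Φ : (ℕ →₀ W) →ₗ[ℂ] (ℕ →₀ W))
    (hΦ : ∀ (k : ℕ) (w : W),
      Φ (Finsupp.single k w) =
        Finsupp.single k ((φ - α • 1) w) -
          (if k = 0 then 0 else Finsupp.single (k - 1) w))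
    (Wα : Submodule ℂ W)
    (hWα : ∀ w : W, w ∈ Wα ↔ ∃ N : ℕ, ((φ - α • 1) ^ N) w = 0) :
    ∃ F : Wα →ₗ[ℂ] LinearMap.ker Φ,
      (∀ (w : Wα) (i : ℕ), ((F w : ℕ →₀ W)) i = ((φ - α • 1) ^ i) (w : W)) ∧
        Function.Bijective F := by
  have hΦ' := Finsupp.apply_eq_sub_apply_succ_of_single hΦ
  exact ⟨_, Module.End.powOrbitKer_apply hΦ' Wα _, Module.End.bijective_powOrbitKer hΦ' Wα hWα⟩
end

section
/- If w ∈ W satisfies (φ − α)^N(w) = 0 for some N ∈ ℕ, then for every j ∈ ℕ one has φ_∞( − Σ_{i=j+1}^{j+N} (φ − α)^{i−j−1}(w) ⊗ e_i ) = w ⊗ e_j. In particular every elementary tensor w ⊗ e_j with w in the generalized α-eigenspace lies in the range of φ_∞. -/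
/-!
With `W_∞ = ℕ →₀ W` and `Φ = φ_∞` as before: if `(φ − α)^N(w) = 0`, then for every `j`,
`φ_∞( − Σ_{i=j+1}^{j+N} (φ − α)^{i−j−1}(w) ⊗ e_i ) = w ⊗ e_j`; in particular every
elementary tensor `w ⊗ e_j` with `w` in the generalized `α`-eigenspace lies in the
range of `φ_∞`.
-/
theorem phi_infty_hits_gen_eigenvectors {W : Type*} [AddCommGroup W] [Module ℂ W]
    (φ : Module.End ℂ W) (α : ℂ)
    (Φ : (ℕ →₀ W) →ₗ[ℂ] (ℕ →₀ W))
    (hΦ : ∀ (k : ℕ) (w : W),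
      Φ (Finsupp.single k w) =
        Finsupp.single k ((φ - α • 1) w) -
          (if k = 0 then 0 else Finsupp.single (k - 1) w))
    (w : W) (N : ℕ) (hw : ((φ - α • 1) ^ N) w = 0) :
    (∀ j : ℕ,
      Φ (-(∑ i ∈ Finset.Icc (j + 1) (j + N),
          Finsupp.single i (((φ - α • 1) ^ (i - j - 1)) w))) = Finsupp.single j w) ∧
    ∀ j : ℕ, Finsupp.single j w ∈ LinearMap.range Φ := by
  have key : ∀ j : ℕ,
      Φ (-(∑ i ∈ Finset.Icc (j + 1) (j + N),
          Finsupp.single i (((φ - α • 1) ^ (i - j - 1)) w))) = Finsupp.single j w := by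
    intro j
    rw [← Finset.Ico_add_one_right_eq_Icc, Finset.sum_Ico_eq_sum_range]
    have hN : j + N + 1 - (j + 1) = N := by omega
    rw [hN, map_neg, map_sum]
    have hterm : ∀ t ∈ Finset.range N,
        Φ (Finsupp.single (j + 1 + t) (((φ - α • 1) ^ (j + 1 + t - j - 1)) w))
          = Finsupp.single (j + (t + 1)) (((φ - α • 1) ^ (t + 1)) w)
            - Finsupp.single (j + t) (((φ - α • 1) ^ t) w) := by
      intro t _
      have ht : j + 1 + t - j - 1 = t := by omega
      have hne : j + 1 + t ≠ 0 := by omega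
      rw [ht, hΦ, if_neg hne]
      have h1 : j + 1 + t - 1 = j + t := by omega
      have h2 : j + 1 + t = j + (t + 1) := by omega
      rw [h1, h2, pow_succ', Module.End.mul_apply]
    rw [Finset.sum_congr rfl hterm,
      Finset.sum_range_sub (fun t => Finsupp.single (j + t) (((φ - α • 1) ^ t) w))]
    simp [hw]
  exact ⟨key, fun j => ⟨_, key j⟩⟩
end

section
/- Let M be a module over the polynomial ring ℂ[X] and suppose b · M = 0 for some nonzero polynomial b ∈ ℂ[X]. Fix α ∈ ℂ, let m_α be the maximal ideal of ℂ[X] generated by X − α, and let M_α = {x ∈ M : (X − α)^N x = 0 for some N ∈ ℕ} be the generalized α-eigenspace of the action of X. Then the composition of the inclusion M_α ↪ M with the canonical localization map M → M_{m_α} is an isomorphism of ℂ[X]-modules from M_α onto the localization M_{m_α} of M at m_α. -/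
open Polynomial

/-- The multiplicative set `ℂ[X] \ m_α`, i.e. the polynomials not vanishing at `α`. -/
noncomputable def complementOfMaxIdeal (α : ℂ) : Submonoid (Polynomial ℂ) where
  carrier := {p : Polynomial ℂ | Polynomial.eval α p ≠ 0}
  one_mem' := by simp
  mul_mem' := by
    intro a b ha hb
    simpa [Polynomial.eval_mul] using mul_ne_zero ha hb

/-!
Let `M` be a `ℂ[X]`-module with `b • M = 0` for some nonzero `b ∈ ℂ[X]`.  Fix `α ∈ ℂ`
and let `Mα = {x : ∃ N, (X − α)^N • x = 0}` be the generalized `α`-eigenspace of the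
`X`-action.  Then the composition of the inclusion `Mα ↪ M` with the canonical map
`M → M_{m_α}` to the localization of `M` at the maximal ideal `m_α = (X − α)` is an
isomorphism of `ℂ[X]`-modules from `Mα` onto `M_{m_α}`.
-/
lemma cop_aux (α : ℂ) {s : Polynomial ℂ} (hs : Polynomial.eval α s ≠ 0) (N : ℕ) :
    IsCoprime ((X - C α) ^ N) s :=
  (((irreducible_X_sub_C α).coprime_iff_not_dvd).mpr
    (by simpa [Polynomial.dvd_iff_isRoot, Polynomial.IsRoot] using hs)).pow_left


theorem gen_eigenspace_iso_localization {M : Type*} [AddCommGroup M]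
    [Module (Polynomial ℂ) M]
    (b : Polynomial ℂ) (hb : b ≠ 0) (hbM : ∀ x : M, b • x = 0)
    (α : ℂ)
    (Mα : Submodule (Polynomial ℂ) M)
    (hMα : ∀ x : M, x ∈ Mα ↔ ∃ N : ℕ, ((X - C α) ^ N) • x = 0) :
    Function.Bijective
      ((LocalizedModule.mkLinearMap (complementOfMaxIdeal α) M).comp Mα.subtype) := by
  set S := complementOfMaxIdeal α
  set n := rootMultiplicity α b with hn
  set c := b /ₘ (X - C α) ^ n with hcdef
  have hc : Polynomial.eval α c ≠ 0 := eval_divByMonic_pow_rootMultiplicity_ne_zero α hb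
  have hbc : (X - C α) ^ n * c = b := pow_mul_divByMonic_rootMultiplicity_eq b α
  have hcS : c ∈ S := hc
  constructor
  · rw [injective_iff_map_eq_zero]
    rintro ⟨x, hx⟩ hfx
    obtain ⟨N, hN⟩ := (hMα x).mp hx
    simp only [LinearMap.comp_apply, Submodule.subtype_apply,
      LocalizedModule.mkLinearMap_apply] at hfx
    rw [← LocalizedModule.zero_mk (1 : S), LocalizedModule.mk_eq] at hfx
    obtain ⟨u, hu⟩ := hfx
    simp only [one_smul, smul_zero, Submonoid.smul_def] at hu
    obtain ⟨a, d, had⟩ := cop_aux α u.2 N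
    have : x = 0 := by
      have h1 : (1 : Polynomial ℂ) • x = 0 := by
        rw [← had, add_smul, mul_smul, mul_smul, hN, hu, smul_zero, smul_zero, add_zero]
      rwa [one_smul] at h1
    exact Subtype.ext this
  · intro z
    induction z using LocalizedModule.induction_on with
    | h x s =>
      obtain ⟨u, w, huw⟩ : IsCoprime c ((X - C α) ^ n) := (cop_aux α hc n).symm
      set x₁ : M := (u * c) • x with hx₁def
      have hx₁ : (X - C α) ^ n • x₁ = 0 := by
        rw [hx₁def, ← mul_smul, show (X - C α) ^ n * (u * c) = u * b by rw [← hbc]; ring,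
          mul_smul, hbM, smul_zero]
      have hx₁Mα : x₁ ∈ Mα := (hMα x₁).mpr ⟨n, hx₁⟩
      -- x = x₁ + x₂ with c • x₂ = 0
      have hsplit : c • x = c • x₁ := by
        have : x = x₁ + (w * (X - C α) ^ n) • x := by
          nth_rewrite 1 [← one_smul (Polynomial ℂ) x]
          rw [← huw, add_smul, hx₁def]
        rw [this, smul_add]
        have : c • (w * (X - C α) ^ n) • x = w • (b • x) := by
          rw [← mul_smul, show c * (w * (X - C α) ^ n) = w * b by rw [← hbc]; ring, mul_smul]
        rw [this, hbM, smul_zero, add_zero]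
      obtain ⟨a, d, had⟩ : IsCoprime (s : Polynomial ℂ) ((X - C α) ^ n) :=
        ((cop_aux α s.2 n).symm)
      refine ⟨⟨a • x₁, Mα.smul_mem a hx₁Mα⟩, ?_⟩
      simp only [LinearMap.comp_apply, Submodule.subtype_apply,
        LocalizedModule.mkLinearMap_apply]
      have hsy : (s : Polynomial ℂ) • (a • x₁) = x₁ := by
        rw [← mul_smul]
        nth_rewrite 2 [← one_smul (Polynomial ℂ) x₁]
        rw [← had, add_smul, mul_smul d, hx₁, smul_zero, add_zero, mul_comm]
      rw [show (LocalizedModule.mk (a • x₁) 1 : LocalizedModule S M)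
            = LocalizedModule.mk ((s : Polynomial ℂ) • (a • x₁)) s from
          (LocalizedModule.mk_cancel s (a • x₁)).symm, hsy, LocalizedModule.mk_eq]
      exact ⟨⟨c, hcS⟩, by
        simp only [Submonoid.smul_def, smul_smul]
        rw [mul_comm (c : Polynomial ℂ) s, mul_smul, mul_smul, hsplit]⟩
end
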